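/- Let S and A be finite nonempty sets, let T : S × A × S → ℝ be a transition kernel, let π and π' be policies with induced transition matrices P_π and P_{π'}, let γ ∈ [0,1), and let h₀ be a probability vector on S. Let h_π and h_{π'} be the discounted state occupancy distributions and let ρ_π(s,a) = π(a|s)·h_π(s) and ρ_{π'}(s,a) = π'(a|s)·h_{π'}(s) be the discounted state-action occupancy distributions. Then D_TV(ρ_π, ρ_{π'}) ≤ (1/(1−γ))·max_{s∈S} D_TV(π(·|s), π'(·|s)). -/

import Mathlib

/-!
The state occupancy satisfies the flow equation `h = (1 - γ) h₀ + γ P h`. Subtracting the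
equations for `π` and `π'` gives `h - h' = γ P (h - h') + γ (P - P') h'`. A column-stochastic `P`
is an `ℓ¹` contraction and every column of `P - P'` has `ℓ¹` norm at most `2ε`, where `ε` is the
largest per-state policy discrepancy, so `‖h - h'‖₁ ≤ γ ‖h - h'‖₁ + 2γε`, i.e.
`‖h - h'‖₁ ≤ 2γε / (1 - γ)`. Splitting `π h - π' h' = (π - π') h + π' (h - h')` then bounds
`‖ρ - ρ'‖₁` by `2ε + 2γε / (1 - γ) = 2ε / (1 - γ)`.
-/

open Finset Matrix

section ColumnStochastic

variable {S : Type*} [Fintype S]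

lemma sum_abs_mulVec_le {M : Matrix S S ℝ} {c : ℝ} (hM : ∀ j, ∑ i, |M i j| ≤ c) (x : S → ℝ) :
    ∑ i, |(M *ᵥ x) i| ≤ c * ∑ j, |x j| :=
  calc ∑ i, |(M *ᵥ x) i| ≤ ∑ i, ∑ j, |M i j| * |x j| :=
        sum_le_sum fun i _ => (abs_sum_le_sum_abs _ _).trans_eq (by simp only [abs_mul])
    _ = ∑ j, (∑ i, |M i j|) * |x j| := by rw [sum_comm]; simp only [sum_mul]
    _ ≤ ∑ j, c * |x j| := by gcongr with j; exact hM j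
    _ = c * ∑ j, |x j| := (mul_sum ..).symm

variable [DecidableEq S]

lemma sum_abs_col_of_mem_colStochastic {M : Matrix S S ℝ} (hM : M ∈ colStochastic ℝ S) (j : S) :
    ∑ i, |M i j| = 1 := by
  simp only [abs_of_nonneg (nonneg_of_mem_colStochastic hM), sum_col_of_mem_colStochastic hM]

lemma mulVec_mem_stdSimplex {M : Matrix S S ℝ} (hM : M ∈ colStochastic ℝ S) {x : S → ℝ}
    (hx : x ∈ stdSimplex ℝ S) : M *ᵥ x ∈ stdSimplex ℝ S :=
  ⟨nonneg_mulVec_of_mem_colStochastic hM hx.1, (sum_mulVec_of_mem_colStochastic hM).trans hx.2⟩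

end ColumnStochastic

section PolicyTransitionMatrix

variable {S A : Type*} [Fintype S] [Fintype A]

/-- Distributions over states are column vectors: column `s` is the next-state distribution
from `s`. -/
def policyTransitionMatrix (T : S → A → S → ℝ) (π : S → A → ℝ) : Matrix S S ℝ :=
  Matrix.of fun s' s => ∑ a, T s a s' * π s a

variable {T : S → A → S → ℝ}

omit [Fintype S] in
lemma policyTransitionMatrix_sub (π π' : S → A → ℝ) :
    policyTransitionMatrix T π - policyTransitionMatrix T π' =
      policyTransitionMatrix T (π - π') := by
  ext s' s
  simp only [policyTransitionMatrix, Matrix.sub_apply, of_apply, Pi.sub_apply, mul_sub,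
    sum_sub_distrib]

lemma sum_abs_policyTransitionMatrix_le (hT : ∀ s a, T s a ∈ stdSimplex ℝ S)
    (σ : S → A → ℝ) (s : S) :
    ∑ s', |policyTransitionMatrix T σ s' s| ≤ ∑ a, |σ s a| :=
  calc ∑ s', |policyTransitionMatrix T σ s' s| ≤ ∑ s', ∑ a, T s a s' * |σ s a| := by
        refine sum_le_sum fun s' _ => (abs_sum_le_sum_abs _ _).trans_eq ?_
        simp only [abs_mul, abs_of_nonneg ((hT s _).1 s')]
    _ = ∑ a, |σ s a| := by
        rw [sum_comm]; simp only [← sum_mul, (hT s _).2, one_mul]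

lemma policyTransitionMatrix_mem_colStochastic [DecidableEq S]
    (hT : ∀ s a, T s a ∈ stdSimplex ℝ S) {π : S → A → ℝ} (hπ : ∀ s, π s ∈ stdSimplex ℝ A) :
    policyTransitionMatrix T π ∈ colStochastic ℝ S := by
  refine mem_colStochastic_iff_sum.2 ⟨fun s' s => ?_, fun s => ?_⟩
  · exact sum_nonneg fun a _ => mul_nonneg ((hT s a).1 s') ((hπ s).1 a)
  · simp only [policyTransitionMatrix, of_apply]
    rw [sum_comm]; simp only [← sum_mul, (hT s _).2, one_mul, (hπ s).2]

end PolicyTransitionMatrix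

section DiscountedOccupancy

variable {S : Type*} [Fintype S] [DecidableEq S]

noncomputable def discountedOccupancy (M : Matrix S S ℝ) (γ : ℝ) (h₀ : S → ℝ) : S → ℝ :=
  fun s => (1 - γ) * ∑' t : ℕ, γ ^ t * (M ^ t *ᵥ h₀) s

variable {M : Matrix S S ℝ} {γ : ℝ} {h₀ : S → ℝ}

lemma summable_discounted_pow_mulVec (hM : M ∈ colStochastic ℝ S) (hγ : γ ∈ Set.Ico 0 1)
    (hh₀ : h₀ ∈ stdSimplex ℝ S) (s : S) :
    Summable fun t : ℕ => γ ^ t * (M ^ t *ᵥ h₀) s := by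
  have hdist (t : ℕ) := mulVec_mem_stdSimplex (pow_mem hM t) hh₀
  refine (summable_geometric_of_lt_one hγ.1 hγ.2).of_nonneg_of_le
    (fun t => mul_nonneg (pow_nonneg hγ.1 t) ((hdist t).1 s)) fun t => ?_
  exact mul_le_of_le_one_right (pow_nonneg hγ.1 t) (stdSimplex.le_one ⟨_, hdist t⟩ s)

lemma discountedOccupancy_mem_stdSimplex (hM : M ∈ colStochastic ℝ S) (hγ : γ ∈ Set.Ico 0 1)
    (hh₀ : h₀ ∈ stdSimplex ℝ S) : discountedOccupancy M γ h₀ ∈ stdSimplex ℝ S := by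
  have hdist (t : ℕ) := mulVec_mem_stdSimplex (pow_mem hM t) hh₀
  refine ⟨fun s => mul_nonneg (by linarith [hγ.2]) (tsum_nonneg fun t =>
    mul_nonneg (pow_nonneg hγ.1 t) ((hdist t).1 s)), ?_⟩
  calc ∑ s, discountedOccupancy M γ h₀ s
      = (1 - γ) * ∑' t : ℕ, ∑ s, γ ^ t * (M ^ t *ᵥ h₀) s := by
        simp only [discountedOccupancy]
        rw [← mul_sum,
          Summable.tsum_finsetSum fun s _ => summable_discounted_pow_mulVec hM hγ hh₀ s]
    _ = (1 - γ) * ∑' t : ℕ, γ ^ t := by simp only [← mul_sum, (hdist _).2, mul_one]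
    _ = 1 := by
        rw [tsum_geometric_of_lt_one hγ.1 hγ.2]
        exact mul_inv_cancel₀ (by linarith [hγ.2])

lemma discountedOccupancy_eq (hM : M ∈ colStochastic ℝ S) (hγ : γ ∈ Set.Ico 0 1)
    (hh₀ : h₀ ∈ stdSimplex ℝ S) :
    discountedOccupancy M γ h₀ = (1 - γ) • h₀ + γ • M *ᵥ discountedOccupancy M γ h₀ := by
  have hsum := summable_discounted_pow_mulVec hM hγ hh₀
  have hshift (s : S) : ∑ s', M s s' * ∑' t : ℕ, γ ^ t * (M ^ t *ᵥ h₀) s' =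
      ∑' t : ℕ, γ ^ t * (M ^ (t + 1) *ᵥ h₀) s := by
    simp only [← tsum_mul_left]
    rw [← Summable.tsum_finsetSum fun s' _ => (hsum s').mul_left _]
    refine tsum_congr fun t => ?_
    rw [pow_succ', ← mulVec_mulVec, mulVec, dotProduct, mul_sum]
    exact sum_congr rfl fun _ _ => by ring
  ext s
  calc discountedOccupancy M γ h₀ s
      = (1 - γ) * (h₀ s + γ * ∑' t : ℕ, γ ^ t * (M ^ (t + 1) *ᵥ h₀) s) := by
        simp only [discountedOccupancy]
        rw [(hsum s).tsum_eq_zero_add, ← tsum_mul_left]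
        simp only [pow_zero, one_mul, one_mulVec, pow_succ, mul_assoc, mul_left_comm γ]
    _ = (1 - γ) * h₀ s + γ * ((1 - γ) * ∑ s', M s s' * ∑' t : ℕ, γ ^ t * (M ^ t *ᵥ h₀) s') := by
        rw [hshift]; ring
    _ = _ := by
        simp only [discountedOccupancy, Pi.add_apply, Pi.smul_apply, smul_eq_mul, mulVec,
          dotProduct, mul_left_comm (M s _) (1 - γ), ← mul_sum]

lemma sum_abs_sub_discountedOccupancy_le {M' : Matrix S S ℝ} {c : ℝ}
    (hM : M ∈ colStochastic ℝ S) (hM' : M' ∈ colStochastic ℝ S)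
    (hc : ∀ j, ∑ i, |(M - M') i j| ≤ c) (hγ : γ ∈ Set.Ico 0 1) (hh₀ : h₀ ∈ stdSimplex ℝ S) :
    ∑ s, |discountedOccupancy M γ h₀ s - discountedOccupancy M' γ h₀ s| ≤ γ / (1 - γ) * c := by
  have hflow := discountedOccupancy_eq hM hγ hh₀
  have hflow' := discountedOccupancy_eq hM' hγ hh₀
  have hh' := discountedOccupancy_mem_stdSimplex hM' hγ hh₀
  set h := discountedOccupancy M γ h₀
  set h' := discountedOccupancy M' γ h₀
  have hdiff : h - h' = γ • (M *ᵥ (h - h') + (M - M') *ᵥ h') := by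
    conv_lhs => rw [hflow, hflow']
    rw [mulVec_sub, sub_mulVec]
    module
  have hbound : ∑ s, |(h - h') s| ≤ γ * (∑ s, |(h - h') s| + c) :=
    calc ∑ s, |(h - h') s| = γ * ∑ s, |(M *ᵥ (h - h') + (M - M') *ᵥ h') s| := by
          conv_lhs => rw [hdiff]
          simp only [Pi.smul_apply, smul_eq_mul, abs_mul, abs_of_nonneg hγ.1, ← mul_sum]
      _ ≤ γ * (∑ s, |(M *ᵥ (h - h')) s| + ∑ s, |((M - M') *ᵥ h') s|) := by
          rw [← sum_add_distrib]
          exact mul_le_mul_of_nonneg_left (sum_le_sum fun s _ => abs_add_le _ _) hγ.1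
      _ ≤ γ * (∑ s, |(h - h') s| + c) := by
          refine mul_le_mul_of_nonneg_left (add_le_add ?_ ?_) hγ.1
          · exact (sum_abs_mulVec_le (fun j => (sum_abs_col_of_mem_colStochastic hM j).le)
              _).trans_eq (one_mul _)
          · simpa [abs_of_nonneg (hh'.1 _), hh'.2] using sum_abs_mulVec_le hc h'
  simp only [Pi.sub_apply] at hbound
  rw [div_mul_eq_mul_div, le_div_iff₀ (sub_pos.2 hγ.2)]
  linarith

end DiscountedOccupancy

lemma sum_abs_mul_sub_mul_le {S A : Type*} [Fintype S] [Fintype A] {π π' : S → A → ℝ}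
    {h h' : S → ℝ} {c : ℝ} (hπ' : ∀ s, π' s ∈ stdSimplex ℝ A) (hh : h ∈ stdSimplex ℝ S)
    (hc : ∀ s, ∑ a, |π s a - π' s a| ≤ c) :
    ∑ s, ∑ a, |π s a * h s - π' s a * h' s| ≤ c + ∑ s, |h s - h' s| := by
  have hrow (s : S) : ∑ a, |π s a * h s - π' s a * h' s| ≤ c * h s + |h s - h' s| :=
    calc ∑ a, |π s a * h s - π' s a * h' s|
        ≤ ∑ a, (|π s a - π' s a| * h s + π' s a * |h s - h' s|) := by
          refine sum_le_sum fun a _ => ?_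
          rw [show π s a * h s - π' s a * h' s = (π s a - π' s a) * h s + π' s a * (h s - h' s) by
            ring]
          refine (abs_add_le _ _).trans_eq ?_
          rw [abs_mul, abs_mul, abs_of_nonneg (hh.1 s), abs_of_nonneg ((hπ' s).1 a)]
      _ = (∑ a, |π s a - π' s a|) * h s + |h s - h' s| := by
          rw [sum_add_distrib, ← sum_mul, ← sum_mul, (hπ' s).2, one_mul]
      _ ≤ c * h s + |h s - h' s| := by gcongr; exacts [hh.1 s, hc s]
  calc _ ≤ ∑ s, (c * h s + |h s - h' s|) := sum_le_sum fun s _ => hrow s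
    _ = c + ∑ s, |h s - h' s| := by rw [sum_add_distrib, ← mul_sum, hh.2, mul_one]

theorem state_action_distribution_discrepancy_general {S A : Type*}
    [Fintype S] [Nonempty S] [DecidableEq S] [Fintype A]
    (T : S → A → S → ℝ)
    (hT0 : ∀ s a s', 0 ≤ T s a s')
    (hT1 : ∀ s a, ∑ s', T s a s' = 1)
    (π π' : S → A → ℝ)
    (hπ0 : ∀ s a, 0 ≤ π s a) (hπ1 : ∀ s, ∑ a, π s a = 1)
    (hπ'0 : ∀ s a, 0 ≤ π' s a) (hπ'1 : ∀ s, ∑ a, π' s a = 1)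
    (Pπ Pπ' : Matrix S S ℝ)
    (hPπ : ∀ s' s, Pπ s' s = ∑ a, T s a s' * π s a)
    (hPπ' : ∀ s' s, Pπ' s' s = ∑ a, T s a s' * π' s a)
    (γ : ℝ) (hγ : γ ∈ Set.Ico (0 : ℝ) 1)
    (h₀ : S → ℝ) (hh₀0 : ∀ s, 0 ≤ h₀ s) (hh₀1 : ∑ s, h₀ s = 1)
    (hπocc hπ'occ : S → ℝ)
    (hocc : ∀ s, hπocc s = (1 - γ) * ∑' t : ℕ, γ ^ t * (Pπ ^ t).mulVec h₀ s)
    (hocc' : ∀ s, hπ'occ s = (1 - γ) * ∑' t : ℕ, γ ^ t * (Pπ' ^ t).mulVec h₀ s) :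
    (1 / 2) * ∑ s, ∑ a, |π s a * hπocc s - π' s a * hπ'occ s| ≤
      (1 / (1 - γ)) *
        Finset.univ.sup' Finset.univ_nonempty
          (fun s => (1 / 2) * ∑ a, |π s a - π' s a|) := by
  set ε := univ.sup' univ_nonempty fun s => (1 / 2) * ∑ a, |π s a - π' s a|
  have hε (s : S) : ∑ a, |π s a - π' s a| ≤ 2 * ε := by
    linarith [le_sup' (fun s => (1 / 2) * ∑ a, |π s a - π' s a|) (mem_univ s)]
  have hT (s : S) (a : A) : T s a ∈ stdSimplex ℝ S := ⟨hT0 s a, hT1 s a⟩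
  obtain rfl : Pπ = policyTransitionMatrix T π := Matrix.ext hPπ
  obtain rfl : Pπ' = policyTransitionMatrix T π' := Matrix.ext hPπ'
  have hP := policyTransitionMatrix_mem_colStochastic hT fun s => ⟨hπ0 s, hπ1 s⟩
  have hP' := policyTransitionMatrix_mem_colStochastic hT fun s => ⟨hπ'0 s, hπ'1 s⟩
  have hPdiff (s : S) : ∑ s', |(policyTransitionMatrix T π - policyTransitionMatrix T π') s' s|
      ≤ 2 * ε := by
    rw [policyTransitionMatrix_sub]
    exact (sum_abs_policyTransitionMatrix_le hT _ s).trans (hε s)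
  obtain rfl : hπocc = discountedOccupancy _ γ h₀ := funext hocc
  obtain rfl : hπ'occ = discountedOccupancy _ γ h₀ := funext hocc'
  have hh₀ : h₀ ∈ stdSimplex ℝ S := ⟨hh₀0, hh₀1⟩
  have h1γ : 1 - γ ≠ 0 := (sub_pos.2 hγ.2).ne'
  calc (1 / 2) * ∑ s, ∑ a, |π s a * _ - π' s a * _|
      ≤ (1 / 2) * (2 * ε + ∑ s, |discountedOccupancy _ γ h₀ s - discountedOccupancy _ γ h₀ s|) := by
        gcongr
        exact sum_abs_mul_sub_mul_le (fun s => ⟨hπ'0 s, hπ'1 s⟩)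
          (discountedOccupancy_mem_stdSimplex hP hγ hh₀) hε
    _ ≤ (1 / 2) * (2 * ε + γ / (1 - γ) * (2 * ε)) := by
        gcongr
        exact sum_abs_sub_discountedOccupancy_le hP hP' hPdiff hγ hh₀
    _ = (1 / (1 - γ)) * ε := by field_simp; ring

/-- **Lemma B3 (state-action distribution discrepancy).**
For policies `π, π'` with discounted state occupancies `hπ, hπ'` and state-action
occupancies `ρ_π(s,a) = π(a|s) hπ(s)`, `ρ_{π'}(s,a) = π'(a|s) hπ'(s)`,
`D_TV(ρ_π, ρ_{π'}) ≤ (1/(1-γ)) maxₛ D_TV(π(·|s), π'(·|s))`. -/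
theorem state_action_distribution_discrepancy {S A : Type*}
    [Fintype S] [Nonempty S] [DecidableEq S] [Fintype A] [Nonempty A]
    (T : S → A → S → ℝ)
    (hT0 : ∀ s a s', 0 ≤ T s a s')
    (hT1 : ∀ s a, ∑ s', T s a s' = 1)
    (π π' : S → A → ℝ)
    (hπ0 : ∀ s a, 0 ≤ π s a) (hπ1 : ∀ s, ∑ a, π s a = 1)
    (hπ'0 : ∀ s a, 0 ≤ π' s a) (hπ'1 : ∀ s, ∑ a, π' s a = 1)
    (Pπ Pπ' : Matrix S S ℝ)
    (hPπ : ∀ s' s, Pπ s' s = ∑ a, T s a s' * π s a)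
    (hPπ' : ∀ s' s, Pπ' s' s = ∑ a, T s a s' * π' s a)
    (γ : ℝ) (hγ : γ ∈ Set.Ico (0 : ℝ) 1)
    (h₀ : S → ℝ) (hh₀0 : ∀ s, 0 ≤ h₀ s) (hh₀1 : ∑ s, h₀ s = 1)
    (hπocc hπ'occ : S → ℝ)
    (hocc : ∀ s, hπocc s = (1 - γ) * ∑' t : ℕ, γ ^ t * (Pπ ^ t).mulVec h₀ s)
    (hocc' : ∀ s, hπ'occ s = (1 - γ) * ∑' t : ℕ, γ ^ t * (Pπ' ^ t).mulVec h₀ s) :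
    (1 / 2) * ∑ s, ∑ a, |π s a * hπocc s - π' s a * hπ'occ s| ≤
      (1 / (1 - γ)) *
        Finset.univ.sup' Finset.univ_nonempty
          (fun s => (1 / 2) * ∑ a, |π s a - π' s a|) :=
  state_action_distribution_discrepancy_general T hT0 hT1 π π' hπ0 hπ1 hπ'0 hπ'1 Pπ Pπ' hPπ hPπ' γ
    hγ h₀ hh₀0 hh₀1 hπocc hπ'occ hocc hocc'
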